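/- For every real n×n matrix A there exists an orthogonal matrix V ∈ ℝ^{n×n} such that all diagonal entries of VᵀAV are equal (necessarily equal to tr(A)/n). -/

import Mathlib

open Matrix Finset

private lemma exists_unit_vec (n : ℕ) (hn : 2 ≤ n) (A : Matrix (Fin n) (Fin n) ℝ) :
    ∃ v : EuclideanSpace ℝ (Fin n), ‖v‖ = 1 ∧
      ∑ j, ∑ k, v j * A j k * v k = A.trace / n := by
  have hn0 : (n : ℝ) ≠ 0 := by positivity
  haveI : NeZero n := ⟨by omega⟩
  set c : ℝ := A.trace / n with hc
  set f : EuclideanSpace ℝ (Fin n) → ℝ := fun v => ∑ j, ∑ k, v j * A j k * v k with hf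
  have hcont : Continuous f := by
    apply continuous_finset_sum
    intro j _
    apply continuous_finset_sum
    intro k _
    exact (((continuous_apply j).comp (PiLp.continuous_ofLp 2 _)).mul continuous_const).mul
      ((continuous_apply k).comp (PiLp.continuous_ofLp 2 _))
  have hfe : ∀ i, f (EuclideanSpace.single i 1) = A i i := by
    intro i
    simp [hf, EuclideanSpace.single_apply, Finset.sum_ite_eq, ite_mul, mul_ite]
  have hsum : ∑ i, A i i = ∑ i : Fin n, c := by
    simp only [Finset.sum_const, Finset.card_univ, Fintype.card_fin, nsmul_eq_mul, hc]
    rw [Matrix.trace]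
    field_simp
    rfl
  have h1 : ∃ i, A i i ≤ c := by
    by_contra h
    push_neg at h
    have := Finset.sum_lt_sum_of_nonempty (Finset.univ_nonempty (α := Fin n)) (fun i _ => h i)
    linarith [hsum]
  have h2 : ∃ i, c ≤ A i i := by
    by_contra h
    push_neg at h
    have := Finset.sum_lt_sum_of_nonempty (Finset.univ_nonempty (α := Fin n)) (fun i _ => h i)
    linarith [hsum]
  obtain ⟨i, hi⟩ := h1
  obtain ⟨j, hj⟩ := h2
  have hrank : (1 : Cardinal) < Module.rank ℝ (EuclideanSpace ℝ (Fin n)) := by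
    rw [← Module.finrank_eq_rank, finrank_euclideanSpace_fin]
    exact_mod_cast hn
  have hsph := (isConnected_sphere hrank (0 : EuclideanSpace ℝ (Fin n)) zero_le_one).isPreconnected
  have hmem : ∀ i, EuclideanSpace.single i (1:ℝ) ∈ Metric.sphere (0 : EuclideanSpace ℝ (Fin n)) 1 := by
    intro i
    simp [mem_sphere_zero_iff_norm, EuclideanSpace.norm_single]
  obtain ⟨v, hv, hfv⟩ := hsph.intermediate_value₂ (g := fun _ => c) (hmem i) (hmem j)
    hcont.continuousOn continuousOn_const (by rw [hfe]; exact hi) (by rw [hfe]; exact hj)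
  exact ⟨v, mem_sphere_zero_iff_norm.mp hv, hfv⟩

private lemma basis_matrix (n : ℕ) (A : Matrix (Fin n) (Fin n) ℝ)
    (b : OrthonormalBasis (Fin n) ℝ (EuclideanSpace ℝ (Fin n))) :
    (Matrix.of fun j i => b i j)ᵀ * (Matrix.of fun j i => b i j) = 1 ∧
      ∀ i, ((Matrix.of fun j i => b i j)ᵀ * A * (Matrix.of fun j i => b i j)) i i
        = ∑ j, ∑ k, b i j * A j k * b i k := by
  set U : Matrix (Fin n) (Fin n) ℝ := Matrix.of fun j i => b i j with hU
  have horth := b.orthonormal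
  rw [orthonormal_iff_ite] at horth
  constructor
  · ext a b'
    have := horth a b'
    simp only [PiLp.inner_apply, RCLike.inner_apply, conj_trivial] at this
    simp [Matrix.mul_apply, hU, Matrix.one_apply, this]
    rw [← this]; exact Finset.sum_congr rfl (fun _ _ => mul_comm _ _)
  · intro i
    simp only [Matrix.mul_apply, Matrix.transpose_apply, hU, Matrix.of_apply]
    simp only [Finset.sum_mul]
    rw [Finset.sum_comm]

private def ext1 {n : ℕ} (W : Matrix (Fin n) (Fin n) ℝ) : Matrix (Fin (n+1)) (Fin (n+1)) ℝ :=
  Matrix.of fun i j =>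
    Fin.cases (Fin.cases 1 (fun _ => 0) j) (fun i' => Fin.cases 0 (fun j' => W i' j') j) i

@[simp] private lemma ext1_00 {n : ℕ} (W : Matrix (Fin n) (Fin n) ℝ) : ext1 W 0 0 = 1 := rfl
@[simp] private lemma ext1_0s {n : ℕ} (W : Matrix (Fin n) (Fin n) ℝ) (j : Fin n) :
    ext1 W 0 j.succ = 0 := rfl
@[simp] private lemma ext1_s0 {n : ℕ} (W : Matrix (Fin n) (Fin n) ℝ) (i : Fin n) :
    ext1 W i.succ 0 = 0 := rfl
@[simp] private lemma ext1_ss {n : ℕ} (W : Matrix (Fin n) (Fin n) ℝ) (i j : Fin n) :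
    ext1 W i.succ j.succ = W i j := rfl

private lemma ext1_orth {n : ℕ} {W : Matrix (Fin n) (Fin n) ℝ} (hW : Wᵀ * W = 1) :
    (ext1 W)ᵀ * ext1 W = 1 := by
  ext a b
  refine Fin.cases ?_ (fun a' => ?_) a <;> refine Fin.cases ?_ (fun b' => ?_) b
  · simp [Matrix.mul_apply, Fin.sum_univ_succ, Matrix.one_apply]
  · simp [Matrix.mul_apply, Fin.sum_univ_succ, Matrix.one_apply, (Fin.succ_ne_zero b').symm]
  · simp [Matrix.mul_apply, Fin.sum_univ_succ, Matrix.one_apply, Fin.succ_ne_zero a']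
  · have := congrFun (congrFun hW a') b'
    simp only [Matrix.mul_apply, Matrix.transpose_apply] at this
    simp [Matrix.mul_apply, Fin.sum_univ_succ, Matrix.one_apply, this, Fin.succ_inj]

private lemma ext1_conj00 {n : ℕ} (W : Matrix (Fin n) (Fin n) ℝ)
    (M : Matrix (Fin (n+1)) (Fin (n+1)) ℝ) :
    ((ext1 W)ᵀ * M * ext1 W) 0 0 = M 0 0 := by
  simp [Matrix.mul_apply, Fin.sum_univ_succ]

private lemma ext1_conjss {n : ℕ} (W : Matrix (Fin n) (Fin n) ℝ)
    (M : Matrix (Fin (n+1)) (Fin (n+1)) ℝ) (a b : Fin n) :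
    ((ext1 W)ᵀ * M * ext1 W) a.succ b.succ
      = (Wᵀ * M.submatrix Fin.succ Fin.succ * W) a b := by
  simp [Matrix.mul_apply, Fin.sum_univ_succ]

private lemma key : ∀ (n : ℕ) (A : Matrix (Fin n) (Fin n) ℝ),
    ∃ V : Matrix (Fin n) (Fin n) ℝ, Vᵀ * V = 1 ∧
      ∀ i, (Vᵀ * A * V) i i = A.trace / n := by
  intro n
  induction n with
  | zero => exact fun A => ⟨1, by simp, fun i => i.elim0⟩
  | succ n ih =>
    intro A
    match n with
    | 0 =>
      refine ⟨1, by simp, fun i => ?_⟩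
      fin_cases i
      simp [Matrix.trace, Matrix.diag]
    | Nat.succ m =>
      obtain ⟨v, hv1, hvf⟩ := exists_unit_vec (m+2) (by omega) A
      have hcard : Module.finrank ℝ (EuclideanSpace ℝ (Fin (m+2))) = Fintype.card (Fin (m+2)) := by
        simp
      have horth : Orthonormal ℝ (Set.restrict {0} (fun _ : Fin (m+2) => v)) := by
        rw [orthonormal_iff_ite]
        intro i j
        rw [Subsingleton.elim i j, if_pos rfl]
        show (inner ℝ v v : ℝ) = 1
        rw [real_inner_self_eq_norm_sq, hv1]
        norm_num
      obtain ⟨b, hb⟩ := horth.exists_orthonormalBasis_extension_of_card_eq hcard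
      have hb0 : b 0 = v := hb 0 rfl
      obtain ⟨hU1, hU2⟩ := basis_matrix (m+2) A b
      set U : Matrix (Fin (m+2)) (Fin (m+2)) ℝ := Matrix.of fun j i => b i j with hU
      set M : Matrix (Fin (m+2)) (Fin (m+2)) ℝ := Uᵀ * A * U with hM
      have hM00 : M 0 0 = A.trace / (m+2) := by
        rw [hU2 0, hb0]
        exact_mod_cast hvf
      have htrM : M.trace = A.trace := by
        rw [hM, Matrix.trace_mul_cycle, mul_eq_one_comm.mp hU1, Matrix.one_mul]
      set M' : Matrix (Fin (m+1)) (Fin (m+1)) ℝ := M.submatrix Fin.succ Fin.succ with hM'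
      have htrM' : M'.trace = A.trace * (m+1) / (m+2) := by
        have hsplit : M.trace = M 0 0 + M'.trace := by
          rw [Matrix.trace, Matrix.trace, Fin.sum_univ_succ]
          rfl
        rw [htrM, hM00] at hsplit
        have : (m:ℝ) + 2 ≠ 0 := by positivity
        field_simp at hsplit ⊢
        linarith
      obtain ⟨W, hW1, hW2⟩ := ih M'
      refine ⟨U * ext1 W, ?_, ?_⟩
      · rw [Matrix.transpose_mul, Matrix.mul_assoc, ← Matrix.mul_assoc Uᵀ, hU1,
          Matrix.one_mul, ext1_orth hW1]
      · have hconj : (U * ext1 W)ᵀ * A * (U * ext1 W) = (ext1 W)ᵀ * M * ext1 W := by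
          rw [hM, Matrix.transpose_mul]
          noncomm_ring
        intro i
        rw [hconj]
        refine Fin.cases ?_ (fun a => ?_) i
        · rw [ext1_conj00, hM00]
          push_cast
          ring
        · rw [ext1_conjss, ← hM', hW2 a, htrM']
          have h1 : (m:ℝ) + 1 ≠ 0 := by positivity
          have h2 : (m:ℝ) + 2 ≠ 0 := by positivity
          push_cast
          field_simp
          ring

theorem stmt_2 (n : ℕ) (A : Matrix (Fin n) (Fin n) ℝ) :
    ∃ V : Matrix (Fin n) (Fin n) ℝ, Vᵀ * V = 1 ∧
      ∀ i j, (Vᵀ * A * V) i i = (Vᵀ * A * V) j j := by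
  obtain ⟨V, hV1, hV2⟩ := key n A
  exact ⟨V, hV1, fun i j => by rw [hV2 i, hV2 j]⟩
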